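/- Let u: B_euc(0,2) × [0,T] → ℝ be smooth, satisfying the heat inequality ∂_t u ≥ Δ u (Euclidean Laplacian) with u(·,0) ≥ 0 on B_euc(0,2), and suppose u ≥ -A on B_euc(0,2) × [0,T] for some A > 0. Then for every ℓ ∈ ℕ there exists T_ℓ > 0 depending only on n, ℓ, A such that u(0,t) ≥ -t^ℓ for all t ∈ [0, min(T, T_ℓ)]. -/

import Mathlib

open Real
open Set

lemma deriv_nonpos_of_min_left {g : ℝ → ℝ} {a d : ℝ} (ha : 0 < a)
    (hg : HasDerivAt g d a) (hmin : ∀ s ∈ Set.Icc 0 a, g a ≤ g s) : d ≤ 0 := by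
  have hslope : Filter.Tendsto (slope g a) (nhdsWithin a (Set.Iio a)) (nhds d) :=
    (hasDerivAt_iff_tendsto_slope.1 hg).mono_left
      (nhdsWithin_mono a (fun x hx => ne_of_lt hx))
  refine le_of_tendsto hslope ?_
  have hIoo : Set.Ioo 0 a ∈ nhdsWithin a (Set.Iio a) := by
    rw [← Set.Iio_inter_Ioi, Set.inter_comm]
    exact Filter.inter_mem (nhdsWithin_le_nhds (Ioi_mem_nhds ha)) self_mem_nhdsWithin
  filter_upwards [hIoo] with s hs
  have h1 : g a ≤ g s := hmin s ⟨hs.1.le, hs.2.le⟩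
  have h2 : s - a < 0 := by linarith [hs.2]
  have h3 : (0:ℝ) ≤ g s - g a := by linarith
  rw [slope_def_field]
  exact div_nonpos_of_nonneg_of_nonpos h3 h2.le

lemma secondDeriv_nonneg_of_isLocalMin {h : ℝ → ℝ} {δ : ℝ} (hδ : 0 < δ)
    (hc : ContDiffOn ℝ (⊤ : ℕ∞) h (Set.Ioo (-δ) δ)) (hmin : IsLocalMin h 0) :
    0 ≤ deriv (deriv h) 0 := by
  by_contra hneg
  push_neg at hneg
  have hopen : IsOpen (Set.Ioo (-δ) δ) := isOpen_Ioo
  have h0mem : (0:ℝ) ∈ Set.Ioo (-δ) δ := by constructor <;> linarith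
  have hd1 : ContDiffOn ℝ (⊤ : ℕ∞) (deriv h) (Set.Ioo (-δ) δ) :=
    hc.deriv_of_isOpen hopen (by exact (by simp))
  have hdiff : DifferentiableOn ℝ h (Set.Ioo (-δ) δ) :=
    hc.differentiableOn (by simp)
  have hdiff1 : DifferentiableOn ℝ (deriv h) (Set.Ioo (-δ) δ) :=
    hd1.differentiableOn (by simp)
  have hcont2 : ContinuousAt (deriv (deriv h)) 0 := by
    have : ContDiffOn ℝ (⊤ : ℕ∞) (deriv (deriv h)) (Set.Ioo (-δ) δ) :=
      hd1.deriv_of_isOpen hopen (by exact (by simp))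
    exact (this.continuousOn.continuousAt (hopen.mem_nhds h0mem))
  have hev : ∀ᶠ r in nhds (0:ℝ), deriv (deriv h) r < 0 :=
    hcont2.eventually_lt_const hneg
  have hev2 : ∀ᶠ r in nhds (0:ℝ), h 0 ≤ h r := hmin
  have hev3 : ∀ᶠ r in nhds (0:ℝ), r ∈ Set.Ioo (-δ) δ := hopen.eventually_mem h0mem
  obtain ⟨ρ, hρpos, hρ⟩ := Metric.eventually_nhds_iff_ball.1 (hev.and (hev2.and hev3))
  set r₀ : ℝ := -(ρ/2) with hr₀
  have hr₀neg : r₀ < 0 := by rw [hr₀]; linarith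
  have hr₀mem : ∀ s ∈ Set.Icc r₀ 0, s ∈ Metric.ball (0:ℝ) ρ := by
    intro s hs
    simp only [Metric.mem_ball, Real.dist_eq, sub_zero]
    rcases hs with ⟨h1, h2⟩
    rw [hr₀] at h1
    exact abs_lt.2 ⟨by linarith, by linarith⟩
  have hderiv0 : deriv h 0 = 0 := hmin.deriv_eq_zero
  have hanti : StrictAntiOn (deriv h) (Set.Icc r₀ 0) := by
    apply strictAntiOn_of_deriv_neg (convex_Icc _ _)
    · exact (hdiff1.continuousOn).mono fun s hs => (hρ _ (hr₀mem s hs)).2.2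
    · intro x hx
      rw [interior_Icc] at hx
      exact (hρ _ (hr₀mem x ⟨hx.1.le, hx.2.le⟩)).1
  have hpos : ∀ x ∈ Set.Ioo r₀ 0, 0 < deriv h x := by
    intro x hx
    have : deriv h 0 < deriv h x :=
      hanti ⟨hx.1.le, hx.2.le⟩ ⟨hr₀neg.le, le_refl _⟩ hx.2
    rw [hderiv0] at this; linarith
  have hmono : StrictMonoOn h (Set.Icc r₀ 0) := by
    apply strictMonoOn_of_deriv_pos (convex_Icc _ _)
    · exact (hdiff.continuousOn).mono fun s hs => (hρ _ (hr₀mem s hs)).2.2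
    · intro x hx
      rw [interior_Icc] at hx
      exact hpos x hx
  have h1 : h r₀ < h 0 := hmono ⟨le_refl _, hr₀neg.le⟩ ⟨hr₀neg.le, le_refl _⟩ hr₀neg
  have h2 : h 0 ≤ h r₀ := (hρ _ (hr₀mem r₀ ⟨le_refl _, hr₀neg.le⟩)).2.1
  linarith



/-- The Euclidean Laplacian in the space variable: `Δ f = ∑ ∂²f/∂xᵢ²`. -/
noncomputable def euclLaplacian (n : ℕ) (f : EuclideanSpace ℝ (Fin n) → ℝ)
    (x : EuclideanSpace ℝ (Fin n)) : ℝ :=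
  ∑ i : Fin n,
    deriv (deriv (fun r : ℝ => f (x + r • EuclideanSpace.single i (1 : ℝ)))) 0

set_option maxHeartbeats 1000000 in
/-- Local maximum principle, Euclidean model case: a smooth supersolution of the heat
equation on `B(0,2) × [0,T]` which is nonnegative at time `0` and bounded below by
`-A` can dip below `0` at the center only to order `t^ℓ`, for every `ℓ`. -/
theorem stmt_16 (n : ℕ) (T A : ℝ) (hT : 0 < T) (hA : 0 < A)
    (u : EuclideanSpace ℝ (Fin n) → ℝ → ℝ)
    (hsmooth : ContDiffOn ℝ (⊤ : ℕ∞) (fun q : EuclideanSpace ℝ (Fin n) × ℝ => u q.1 q.2)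
      (Metric.ball (0 : EuclideanSpace ℝ (Fin n)) 2 ×ˢ Set.Icc 0 T))
    (hheat : ∀ x ∈ Metric.ball (0 : EuclideanSpace ℝ (Fin n)) 2,
      ∀ t ∈ Set.Icc (0 : ℝ) T,
        deriv (fun s => u x s) t ≥ euclLaplacian n (fun y => u y t) x)
    (hinit : ∀ x ∈ Metric.ball (0 : EuclideanSpace ℝ (Fin n)) 2, 0 ≤ u x 0)
    (hlower : ∀ x ∈ Metric.ball (0 : EuclideanSpace ℝ (Fin n)) 2,
      ∀ t ∈ Set.Icc (0 : ℝ) T, -A ≤ u x t) :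
    ∀ ℓ : ℕ, ∃ Tℓ : ℝ, 0 < Tℓ ∧
      ∀ t ∈ Set.Icc (0 : ℝ) (min T Tℓ), -(t ^ ℓ) ≤ u 0 t := by
  intro ℓ
  set K : ℝ := 2*n + 4*(ℓ+2) with hK
  have hK0 : 0 < K := by rw [hK]; positivity
  have h02 : (0 : EuclideanSpace ℝ (Fin n)) ∈ Metric.ball (0 : EuclideanSpace ℝ (Fin n)) 2 := by
    simp
  -- master claim via parabolic maximum principle with barrier A*(‖x‖²+Kt)^(ℓ+2) + εt
  have master : ∀ T', 0 < T' → T' < T → ∀ ε, 0 < ε →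
      ∀ x ∈ Metric.closedBall (0 : EuclideanSpace ℝ (Fin n)) 1, ∀ t ∈ Set.Icc 0 T',
      0 ≤ u x t + (A * (‖x‖^2 + K * t) ^ (ℓ+2) + ε * t) := by
    intro T' hT'0 hT'T ε hε
    set S : Set (EuclideanSpace ℝ (Fin n) × ℝ) :=
      Metric.ball 0 2 ×ˢ Set.Ioo 0 T with hSdef
    have hSopen : IsOpen S := Metric.isOpen_ball.prod isOpen_Ioo
    have husm : ContDiffOn ℝ (⊤ : ℕ∞) (fun q : EuclideanSpace ℝ (Fin n) × ℝ => u q.1 q.2) S :=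
      hsmooth.mono (Set.prod_mono subset_rfl Set.Ioo_subset_Icc_self)
    set W : EuclideanSpace ℝ (Fin n) × ℝ → ℝ :=
      fun q => u q.1 q.2 + (A * (‖q.1‖^2 + K * q.2) ^ (ℓ+2) + ε * q.2) with hWdef
    set K₀ : Set (EuclideanSpace ℝ (Fin n) × ℝ) :=
      Metric.closedBall 0 1 ×ˢ Set.Icc 0 T' with hK₀def
    have hK₀c : IsCompact K₀ := (isCompact_closedBall _ _).prod isCompact_Icc
    have hK₀ne : K₀.Nonempty := ⟨(0,0), ⟨by simp, ⟨le_refl _, hT'0.le⟩⟩⟩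
    have hK₀sub : K₀ ⊆ Metric.ball 0 2 ×ˢ Set.Icc 0 T := by
      rintro ⟨x,t⟩ ⟨hx, ht⟩
      exact ⟨Metric.closedBall_subset_ball (by norm_num) hx, ⟨ht.1, ht.2.trans hT'T.le⟩⟩
    have hWc : ContinuousOn W K₀ := by
      apply ContinuousOn.add
      · exact hsmooth.continuousOn.mono hK₀sub
      · apply Continuous.continuousOn
        apply Continuous.add
        · exact continuous_const.mul (((continuous_fst.norm.pow 2).add
            (continuous_const.mul continuous_snd)).pow _)
        · exact continuous_const.mul continuous_snd
    obtain ⟨⟨x₀, t₀⟩, hq₀K, hq₀min⟩ := hK₀c.exists_isMinOn hK₀ne hWc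
    suffices hfin : 0 ≤ W (x₀, t₀) by
      intro x hx t ht
      have h1 := isMinOn_iff.1 hq₀min (x, t) ⟨hx, ht⟩
      have h2 : W (x, t) = u x t + (A * (‖x‖^2 + K * t) ^ (ℓ+2) + ε * t) := rfl
      rw [← h2]
      exact le_trans hfin h1
    by_contra hneg
    push_neg at hneg
    obtain ⟨hx₀', ht₀'⟩ := hq₀K
    have hx₀ : x₀ ∈ Metric.closedBall (0 : EuclideanSpace ℝ (Fin n)) 1 := hx₀'
    have ht₀ : t₀ ∈ Set.Icc 0 T' := ht₀'
    have hx₀n : ‖x₀‖ ≤ 1 := mem_closedBall_zero_iff.1 hx₀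
    have hx₀b : x₀ ∈ Metric.ball (0 : EuclideanSpace ℝ (Fin n)) 2 :=
      Metric.closedBall_subset_ball (by norm_num) hx₀
    have ht₀T : t₀ ∈ Set.Icc 0 T := ⟨ht₀.1, ht₀.2.trans hT'T.le⟩
    have ht₀pos : 0 < t₀ := by
      rcases eq_or_lt_of_le ht₀.1 with h0 | h
      · exfalso
        rw [← h0] at hneg
        have h1 : 0 ≤ u x₀ 0 := hinit x₀ hx₀b
        have h2 : W (x₀, 0) = u x₀ 0 + (A * (‖x₀‖^2 + K * 0) ^ (ℓ+2) + ε * 0) := rfl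
        rw [h2] at hneg
        have h3 : 0 ≤ A * (‖x₀‖^2 + K * 0) ^ (ℓ+2) + ε * 0 := by
          rw [mul_zero, add_zero, mul_zero, add_zero]
          positivity
        linarith
      · exact h
    have hx₀lt : ‖x₀‖ < 1 := by
      rcases lt_or_eq_of_le hx₀n with h | h
      · exact h
      · exfalso
        have h1 : -A ≤ u x₀ t₀ := hlower x₀ hx₀b t₀ ht₀T
        have h2 : (1:ℝ) ≤ (‖x₀‖^2 + K*t₀)^(ℓ+2) := by
          apply one_le_pow₀
          rw [h]
          nlinarith [mul_nonneg hK0.le ht₀.1]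
        have h3 : 0 ≤ ε * t₀ := mul_nonneg hε.le ht₀.1
        have h4 : W (x₀, t₀) = u x₀ t₀ + (A * (‖x₀‖^2 + K * t₀) ^ (ℓ+2) + ε * t₀) := rfl
        rw [h4] at hneg
        nlinarith
    have ht₀ltT : t₀ < T := lt_of_le_of_lt ht₀.2 hT'T
    have hq₀S : ((x₀, t₀) : EuclideanSpace ℝ (Fin n) × ℝ) ∈ S := ⟨hx₀b, ⟨ht₀pos, ht₀ltT⟩⟩
    set c : ℝ := ‖x₀‖^2 with hc
    set Q : ℝ := c + K * t₀ with hQ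
    have hc0 : 0 ≤ c := by rw [hc]; positivity
    have hQc : c ≤ Q := by rw [hQ]; nlinarith [mul_nonneg hK0.le ht₀.1]
    have hQ0 : 0 ≤ Q := le_trans hc0 hQc
    -- time derivative part
    have hcu : ContDiffAt ℝ (⊤ : ℕ∞) (fun q : EuclideanSpace ℝ (Fin n) × ℝ => u q.1 q.2) (x₀, t₀) :=
      husm.contDiffAt (hSopen.mem_nhds hq₀S)
    have hDu : DifferentiableAt ℝ (fun s => u x₀ s) t₀ := by
      have h1 : ContDiffAt ℝ (⊤ : ℕ∞) (fun s : ℝ => u x₀ s) t₀ :=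
        hcu.comp t₀ (contDiffAt_const.prodMk contDiffAt_id)
      exact h1.differentiableAt (by simp)
    set Du : ℝ := deriv (fun s => u x₀ s) t₀ with hDudef
    have htime : Du + (A * (((ℓ+2:ℕ):ℝ) * Q^(ℓ+1) * K) + ε) ≤ 0 := by
      have hgu : HasDerivAt (fun s => u x₀ s) Du t₀ := hDu.hasDerivAt
      have h1 : HasDerivAt (fun s:ℝ => c + K*s) K t₀ := by
        simpa using ((hasDerivAt_id t₀).const_mul K).const_add c
      have h2 := (h1.pow (ℓ+2)).const_mul A
      have h3 : HasDerivAt (fun s:ℝ => ε * s) ε t₀ := by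
        simpa using (hasDerivAt_id t₀).const_mul ε
      have h4 := hgu.add (h2.add h3)
      have h5 : HasDerivAt (fun s:ℝ => u x₀ s + (A * (c + K*s)^(ℓ+2) + ε*s))
          (Du + (A * (((ℓ+2:ℕ):ℝ) * Q^(ℓ+1) * K) + ε)) t₀ := by
        convert h4 using 2
        all_goals rfl
      apply deriv_nonpos_of_min_left ht₀pos h5
      intro s hs
      have h6 := isMinOn_iff.1 hq₀min (x₀, s) ⟨hx₀, ⟨hs.1, hs.2.trans ht₀.2⟩⟩
      have h7 : W (x₀, t₀) = u x₀ t₀ + (A * (c + K*t₀)^(ℓ+2) + ε*t₀) := rfl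
      have h8 : W (x₀, s) = u x₀ s + (A * (c + K*s)^(ℓ+2) + ε*s) := rfl
      rw [h7, h8] at h6
      exact h6
    -- spatial part
    have hsumsq : ∑ i : Fin n, (x₀ i)^2 = c := by
      rw [hc, EuclideanSpace.norm_eq,
        Real.sq_sqrt (Finset.sum_nonneg fun i _ => sq_nonneg _)]
      simp [Real.norm_eq_abs, sq_abs]
    have hspace : ∀ i : Fin n,
        0 ≤ deriv (deriv (fun r : ℝ => u (x₀ + r • EuclideanSpace.single i (1:ℝ)) t₀)) 0
          + (A*((ℓ+2:ℕ):ℝ)) * (((ℓ+1:ℕ):ℝ) * Q^ℓ * (2*x₀ i) * (2*x₀ i) + Q^(ℓ+1) * 2) := by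
      intro i
      set e : EuclideanSpace ℝ (Fin n) := EuclideanSpace.single i (1:ℝ) with he
      set xi : ℝ := x₀ i with hxi
      have henorm : ‖e‖ = 1 := by rw [he]; simp
      have hnorm : ∀ r : ℝ, ‖x₀ + r • e‖^2 = c + (2*xi*r + r^2) := by
        intro r
        rw [norm_add_sq_real, real_inner_smul_right, norm_smul, henorm]
        have h1 : inner ℝ x₀ e = xi := by
          rw [he, hxi]
          simp [EuclideanSpace.inner_single_right]
        rw [h1, hc]
        simp only [Real.norm_eq_abs, mul_one]
        rw [sq_abs]
        ring
      set P : ℝ → ℝ := fun r => c + (2*xi*r + r^2) + K*t₀ with hP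
      set F : ℝ → ℝ := fun r => u (x₀ + r • e) t₀ + (A * (P r)^(ℓ+2) + ε*t₀) with hF
      have hFW : ∀ r : ℝ, F r = W (x₀ + r • e, t₀) := by
        intro r
        have h1 : W (x₀ + r • e, t₀)
            = u (x₀ + r • e) t₀ + (A * (‖x₀ + r • e‖^2 + K*t₀)^(ℓ+2) + ε*t₀) := rfl
        rw [h1, hnorm r]
      have hloc : IsLocalMin F 0 := by
        have hδ : 0 < 1 - ‖x₀‖ := by linarith
        have hball := Metric.ball_mem_nhds (0:ℝ) hδ
        show ∀ᶠ r in nhds 0, F 0 ≤ F r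
        filter_upwards [hball] with r hr
        rw [Metric.mem_ball, Real.dist_eq, sub_zero] at hr
        have h0 : F 0 = W (x₀, t₀) := by
          rw [hFW 0, zero_smul, add_zero]
        rw [h0, hFW r]
        apply isMinOn_iff.1 hq₀min
        refine ⟨?_, ht₀⟩
        rw [mem_closedBall_zero_iff]
        calc ‖x₀ + r • e‖ ≤ ‖x₀‖ + ‖r • e‖ := norm_add_le _ _
          _ = ‖x₀‖ + |r| := by rw [norm_smul, henorm, Real.norm_eq_abs, mul_one]
          _ ≤ 1 := by linarith
      set L : ℝ → (EuclideanSpace ℝ (Fin n)) × ℝ := fun r => (x₀ + r • e, t₀) with hL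
      have hLc : ContDiff ℝ (⊤ : ℕ∞) L := by
        apply ContDiff.prodMk
        · exact contDiff_const.add (contDiff_id.smul contDiff_const)
        · exact contDiff_const
      have hL0 : (0:ℝ) ∈ L ⁻¹' S := by
        have : L 0 = (x₀, t₀) := by rw [hL]; simp
        simp only [Set.mem_preimage, this]
        exact hq₀S
      obtain ⟨δ₂, hδ₂pos, hδ₂⟩ :=
        Metric.isOpen_iff.1 (hSopen.preimage hLc.continuous) 0 hL0
      have hIooball : Set.Ioo (-δ₂:ℝ) δ₂ ⊆ Metric.ball (0:ℝ) δ₂ := by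
        intro r hr
        rw [Metric.mem_ball, Real.dist_eq, sub_zero]
        exact abs_lt.2 ⟨hr.1, hr.2⟩
      have huL : ContDiffOn ℝ (⊤ : ℕ∞) (fun r => u (x₀ + r • e) t₀) (Set.Ioo (-δ₂) δ₂) := by
        have h1 : ContDiffOn ℝ (⊤ : ℕ∞) ((fun q : EuclideanSpace ℝ (Fin n) × ℝ => u q.1 q.2) ∘ L)
            (Set.Ioo (-δ₂) δ₂) := by
          apply husm.comp hLc.contDiffOn
          intro r hr
          exact hδ₂ (hIooball hr)
        exact h1
      have hPc : ContDiff ℝ (⊤ : ℕ∞) P := by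
        apply ContDiff.add
        apply ContDiff.add
        · exact contDiff_const
        · exact ((contDiff_const.mul contDiff_id).add (contDiff_id.pow 2))
        · exact contDiff_const
      have hFsm : ContDiffOn ℝ (⊤ : ℕ∞) F (Set.Ioo (-δ₂) δ₂) := by
        apply ContDiffOn.add huL
        exact ((contDiff_const.mul (hPc.pow _)).add contDiff_const).contDiffOn
      have hkey := secondDeriv_nonneg_of_isLocalMin hδ₂pos hFsm hloc
      -- compute deriv (deriv F) 0
      have hPd : ∀ r : ℝ, HasDerivAt P (2*xi + 2*r) r := by
        intro r
        have ha : HasDerivAt (fun s:ℝ => 2*xi*s) (2*xi) r := by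
          simpa using (hasDerivAt_id r).const_mul (2*xi)
        have hb : HasDerivAt (fun s:ℝ => s^2) (2*r) r := by
          simpa using hasDerivAt_pow 2 r
        have hab := ((ha.add hb).const_add c).add_const (K*t₀)
        exact hab
      have hg2d : ∀ r : ℝ, HasDerivAt (fun s => A * (P s)^(ℓ+2) + ε*t₀)
          ((A*((ℓ+2:ℕ):ℝ)) * ((P r)^(ℓ+1) * (2*xi + 2*r))) r := by
        intro r
        have h1 := (((hPd r).pow (ℓ+2)).const_mul A).add_const (ε*t₀)
        convert h1 using 1
        rfl
        rfl
        rfl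
        push_cast
        ring
      have hIoo_open : IsOpen (Set.Ioo (-δ₂:ℝ) δ₂) := isOpen_Ioo
      have h0I : (0:ℝ) ∈ Set.Ioo (-δ₂) δ₂ := by constructor <;> simp [hδ₂pos]
      have huLd : DifferentiableOn ℝ (fun r => u (x₀ + r • e) t₀) (Set.Ioo (-δ₂) δ₂) :=
        huL.differentiableOn (by simp)
      have hder1 : ∀ r ∈ Set.Ioo (-δ₂:ℝ) δ₂, deriv F r
          = deriv (fun r => u (x₀ + r • e) t₀) r
            + (A*((ℓ+2:ℕ):ℝ)) * ((P r)^(ℓ+1) * (2*xi + 2*r)) := by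
        intro r hr
        have h1 : F = fun r => u (x₀ + r • e) t₀ + (A * (P r)^(ℓ+2) + ε*t₀) := rfl
        rw [h1, deriv_fun_add (huLd.differentiableAt (hIoo_open.mem_nhds hr))
          (hg2d r).differentiableAt, (hg2d r).deriv]
      have hev : deriv F =ᶠ[nhds 0] fun r =>
          deriv (fun r => u (x₀ + r • e) t₀) r
            + (A*((ℓ+2:ℕ):ℝ)) * ((P r)^(ℓ+1) * (2*xi + 2*r)) := by
        filter_upwards [hIoo_open.mem_nhds h0I] with r hr using hder1 r hr
      have hP0 : P 0 = Q := by
        rw [hP, hQ]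
        norm_num
      have hGd : HasDerivAt (fun r => (A*((ℓ+2:ℕ):ℝ)) * ((P r)^(ℓ+1) * (2*xi + 2*r)))
          ((A*((ℓ+2:ℕ):ℝ)) * (((ℓ+1:ℕ):ℝ) * Q^ℓ * (2*xi) * (2*xi) + Q^(ℓ+1) * 2)) 0 := by
        have h1 := (hPd 0).pow (ℓ+1)
        have h2 : HasDerivAt (fun r:ℝ => 2*xi + 2*r) 2 0 := by
          simpa using ((hasDerivAt_id (0:ℝ)).const_mul 2).const_add (2*xi)
        have h3 := (h1.mul h2).const_mul (A*((ℓ+2:ℕ):ℝ))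
        convert h3 using 1
        rfl
        rfl
        rfl
        rw [hP0]
        norm_num
        exact Or.inl (by rw [hP0])
      have hud2 : DifferentiableAt ℝ (deriv (fun r : ℝ => u (x₀ + r • e) t₀)) (0:ℝ) := by
        have h1 : ContDiffOn ℝ (⊤ : ℕ∞) (deriv (fun r : ℝ => u (x₀ + r • e) t₀))
            (Set.Ioo (-δ₂) δ₂) := huL.deriv_of_isOpen hIoo_open (by simp)
        exact (h1.differentiableOn (by simp)).differentiableAt (hIoo_open.mem_nhds h0I)
      have hD2 : deriv (deriv F) 0 = deriv (deriv (fun r : ℝ => u (x₀ + r • e) t₀)) (0:ℝ)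
          + (A*((ℓ+2:ℕ):ℝ)) * (((ℓ+1:ℕ):ℝ) * Q^ℓ * (2*xi) * (2*xi) + Q^(ℓ+1) * 2) := by
        rw [hev.deriv_eq, deriv_fun_add hud2 hGd.differentiableAt, hGd.deriv]
      rw [hD2] at hkey
      exact hkey
    -- assemble
    set Lap : ℝ := euclLaplacian n (fun y => u y t₀) x₀ with hLapdef
    have hheat' : Lap ≤ Du := hheat x₀ hx₀b t₀ ht₀T
    have hLapTotal : 0 ≤ Lap
        + (A*((ℓ+2:ℕ):ℝ)) * (((ℓ+1:ℕ):ℝ) * Q^ℓ * (4*c) + (n:ℝ) * (Q^(ℓ+1) * 2)) := by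
      have h1 : 0 ≤ Lap + ∑ i : Fin n,
          (A*((ℓ+2:ℕ):ℝ)) * (((ℓ+1:ℕ):ℝ) * Q^ℓ * (2*x₀ i) * (2*x₀ i) + Q^(ℓ+1) * 2) := by
        rw [hLapdef]
        simp only [euclLaplacian]
        rw [← Finset.sum_add_distrib]
        exact Finset.sum_nonneg fun i _ => hspace i
      have h2 : ∑ i : Fin n,
          (A*((ℓ+2:ℕ):ℝ)) * (((ℓ+1:ℕ):ℝ) * Q^ℓ * (2*x₀ i) * (2*x₀ i) + Q^(ℓ+1) * 2)
          = (A*((ℓ+2:ℕ):ℝ)) * (((ℓ+1:ℕ):ℝ) * Q^ℓ * (4*c) + (n:ℝ) * (Q^(ℓ+1) * 2)) := by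
        rw [← Finset.mul_sum]
        congr 1
        rw [Finset.sum_add_distrib, Finset.sum_const, Finset.card_univ, Fintype.card_fin,
          nsmul_eq_mul]
        congr 1
        have h4 : ∀ i : Fin n, ((ℓ+1:ℕ):ℝ) * Q^ℓ * (2*x₀ i) * (2*x₀ i)
            = (((ℓ+1:ℕ):ℝ) * Q^ℓ * 4) * (x₀ i)^2 := fun i => by ring
        rw [Finset.sum_congr rfl (fun i _ => h4 i), ← Finset.mul_sum, hsumsq]
        ring
      rw [h2] at h1
      exact h1
    have hkey2 : ((ℓ+1:ℕ):ℝ) * c * Q^ℓ ≤ ((ℓ+2:ℕ):ℝ) * (Q * Q^ℓ) := by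
      have h1 : ((ℓ+1:ℕ):ℝ) * c ≤ ((ℓ+2:ℕ):ℝ) * Q := by
        have h2 : ((ℓ+1:ℕ):ℝ) ≤ ((ℓ+2:ℕ):ℝ) := by push_cast; linarith
        have h3 : (0:ℝ) ≤ ((ℓ+1:ℕ):ℝ) := by positivity
        nlinarith
      have h2 : (0:ℝ) ≤ Q^ℓ := pow_nonneg hQ0 ℓ
      nlinarith [mul_le_mul_of_nonneg_right h1 h2]
    have hmain : (A*((ℓ+2:ℕ):ℝ)) * (((ℓ+1:ℕ):ℝ) * Q^ℓ * (4*c) + (n:ℝ) * (Q^(ℓ+1) * 2))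
        ≤ A * (((ℓ+2:ℕ):ℝ) * Q^(ℓ+1) * K) := by
      have hQpow : Q^(ℓ+1) = Q * Q^ℓ := pow_succ' Q ℓ
      rw [hQpow, hK]
      push_cast
      push_cast at hkey2
      nlinarith [mul_le_mul_of_nonneg_left hkey2
        (show (0:ℝ) ≤ 4*A*(((ℓ:ℝ)+2)) by positivity)]
    linarith [htime, hheat', hLapTotal, hmain, hε]
  -- center-point bound on all of [0, T]
  have step2 : ∀ t ∈ Set.Icc 0 T, 0 ≤ u 0 t + A * (K*t)^(ℓ+2) := by
    have hmem0 : (0 : EuclideanSpace ℝ (Fin n)) ∈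
        Metric.closedBall (0 : EuclideanSpace ℝ (Fin n)) 1 := by simp
    have hinterior : ∀ t, 0 < t → t < T → 0 ≤ u 0 t + A * (K*t)^(ℓ+2) := by
      intro t ht0 htT
      by_contra hcon
      push_neg at hcon
      set v : ℝ := u 0 t + A * (K*t)^(ℓ+2) with hv
      have hε : 0 < -v / (2*t) := by
        apply div_pos (by linarith) (by linarith)
      have := master ((t+T)/2) (by linarith) (by linarith) (-v/(2*t)) hε 0 hmem0 t
        ⟨ht0.le, by linarith⟩
      rw [norm_zero] at this
      have heq : (0:ℝ)^2 + K * t = K * t := by ring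
      rw [heq] at this
      have : 0 ≤ v + -v/(2*t) * t := by rw [hv]; linarith
      have hne : t ≠ 0 := ne_of_gt ht0
      have : -v/(2*t)*t = -v/2 := by field_simp
      nlinarith [hε]
    intro t ht
    rcases eq_or_lt_of_le ht.1 with h0 | htpos
    · have : A * (K*(0:ℝ))^(ℓ+2) = 0 := by
        rw [mul_zero]; rw [zero_pow (by omega)]; ring
      rw [← h0, this, add_zero]
      exact hinit 0 h02
    rcases eq_or_lt_of_le ht.2 with hTeq | htlt
    · -- t = T : by continuity from the interior values
      subst hTeq
      have hu0c : ContinuousOn (fun s => u 0 s) (Set.Icc 0 t) := by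
        have hmap : Set.MapsTo (fun s : ℝ => ((0 : EuclideanSpace ℝ (Fin n)), s))
            (Set.Icc 0 t) (Metric.ball (0 : EuclideanSpace ℝ (Fin n)) 2 ×ˢ Set.Icc 0 t) :=
          fun s hs => ⟨h02, hs⟩
        exact hsmooth.continuousOn.comp
          (Continuous.continuousOn (by continuity)) hmap
      have hfc : ContinuousOn (fun s => u 0 s + A * (K*s)^(ℓ+2)) (Set.Icc 0 t) := by
        apply hu0c.add
        exact Continuous.continuousOn (by continuity)
      have hW : ContinuousWithinAt (fun s => u 0 s + A * (K*s)^(ℓ+2)) (Set.Ioo 0 t) t :=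
        (hfc t (by constructor <;> linarith)).mono Set.Ioo_subset_Icc_self
      have hNB : (nhdsWithin t (Set.Ioo 0 t)).NeBot := by
        rw [← mem_closure_iff_nhdsWithin_neBot, closure_Ioo (ne_of_lt htpos)]
        exact ⟨htpos.le, le_refl _⟩
      refine ge_of_tendsto hW ?_
      filter_upwards [self_mem_nhdsWithin] with s hs
      exact hinterior s hs.1 hs.2
    · exact hinterior t htpos htlt
  -- choose Tℓ and conclude
  have hAK : 0 < A * K^(ℓ+2) := by positivity
  refine ⟨min 1 (1/(A * K^(ℓ+2))), lt_min one_pos (by positivity), ?_⟩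
  intro t ht
  have ht0 : 0 ≤ t := ht.1
  have htT : t ≤ T := le_trans ht.2 (min_le_left _ _)
  have ht1 : t ≤ 1 := le_trans ht.2 ((min_le_right _ _).trans (min_le_left _ _))
  have htA : t ≤ 1/(A * K^(ℓ+2)) := le_trans ht.2 ((min_le_right _ _).trans (min_le_right _ _))
  have hb := step2 t ⟨ht0, htT⟩
  have hpow : A * (K*t)^(ℓ+2) ≤ t^ℓ := by
    have hsplit : A * (K*t)^(ℓ+2) = (A * K^(ℓ+2) * t^2) * t^ℓ := by
      rw [mul_pow]; ring
    rw [hsplit]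
    have h1 : A * K^(ℓ+2) * t^2 ≤ 1 := by
      have : t * t ≤ (1/(A * K^(ℓ+2))) * 1 := mul_le_mul htA ht1 ht0 (by positivity)
      have h2 : t^2 ≤ 1/(A*K^(ℓ+2)) := by nlinarith
      calc A * K^(ℓ+2) * t^2 ≤ A * K^(ℓ+2) * (1/(A*K^(ℓ+2))) :=
            by apply mul_le_mul_of_nonneg_left h2 hAK.le
        _ = 1 := by field_simp
    have htl : (0:ℝ) ≤ t^ℓ := pow_nonneg ht0 ℓ
    calc (A * K^(ℓ+2) * t^2) * t^ℓ ≤ 1 * t^ℓ := mul_le_mul_of_nonneg_right h1 htl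
      _ = t^ℓ := one_mul _
  linarith
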